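/- arXiv:math/0311136 — 3 statements merged into one kernel-verified Lean document; each statement's English description precedes it below -/
import Mathlib

section
/- Let β = β1 ⊕ β2 be an orthogonal decomposition of the nondegenerate Q/Z-valued linking form on G = Z/2 ⊕ (Z/3)^{2h} given by [1/2] ⊕ ⊕^h [[0,1/3],[1/3,0]], where β1 has an even symmetric presentation matrix of rank 2h−1 and β2 is metabolic. Then the metabolizer of β2 is a nontrivial 3-group, and hence contains a nonzero character χ of order 3 with β(χ,χ) = 0. -/
open Matrix

/-- The ℚ/ℤ-valued linking form [1/2] ⊕ ⊕ʰ [[0,1/3],[1/3,0]] on ℤ/2 ⊕ (ℤ/3)^{2h}. -/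
def exForm (h : ℕ) (u v : ZMod 2 × (Fin (2 * h) → ZMod 3)) : AddCircle (1 : ℚ) :=
  (((u.1.val * v.1.val : ℚ) / 2
    + ∑ k : Fin h,
        ((u.2 ⟨2 * k.val, by have := k.isLt; omega⟩).val *
            (v.2 ⟨2 * k.val + 1, by have := k.isLt; omega⟩).val
          + (u.2 ⟨2 * k.val + 1, by have := k.isLt; omega⟩).val *
            (v.2 ⟨2 * k.val, by have := k.isLt; omega⟩).val : ℚ) / 3 : ℚ) : ℚ)

lemma exForm_zero_right (h : ℕ) (g : ZMod 2 × (Fin (2 * h) → ZMod 3)) :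
    exForm h g 0 = 0 := by
  have : ((0 : ℚ) : AddCircle (1:ℚ)) = 0 := rfl
  simp [exForm, this]

lemma half_add_third (N : ℕ) :
    ((1/2 + (N : ℚ)/3 : ℚ) : AddCircle (1:ℚ)) ≠ 0 := by
  intro hc
  rw [AddCircle.coe_eq_zero_iff (p := (1:ℚ))] at hc
  obtain ⟨n, hn⟩ := hc
  rw [zsmul_eq_mul, mul_one] at hn
  have h6 : (6 : ℚ) * n = 3 + 2 * N := by linarith
  have : 6 * n = 3 + 2 * (N : ℤ) := by exact_mod_cast h6
  omega

lemma exForm_self_ne (h : ℕ) (u : ZMod 2 × (Fin (2 * h) → ZMod 3))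
    (hu : u.1 = 1) : exForm h u u ≠ 0 := by
  have hval : (u.1.val : ℚ) = 1 := by rw [hu]; norm_num [ZMod.val_one]
  set N : ℕ := ∑ k : Fin h,
      ((u.2 ⟨2 * k.val, by have := k.isLt; omega⟩).val *
          (u.2 ⟨2 * k.val + 1, by have := k.isLt; omega⟩).val
        + (u.2 ⟨2 * k.val + 1, by have := k.isLt; omega⟩).val *
          (u.2 ⟨2 * k.val, by have := k.isLt; omega⟩).val) with hN
  have : exForm h u u = ((1/2 + (N : ℚ)/3 : ℚ) : AddCircle (1:ℚ)) := by
    unfold exForm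
    congr 1
    rw [hval, hN]
    push_cast
    rw [← Finset.sum_div]
    norm_num
  rw [this]
  exact half_add_third N

lemma stmt10_counting (h : ℕ) (hh : 1 ≤ h)
    (G1 : AddSubgroup (ZMod 2 × (Fin (2 * h) → ZMod 3)))
    (A : Matrix (Fin (2 * h - 1)) (Fin (2 * h - 1)) ℤ)
    (e : ((Fin (2 * h - 1) → ℤ) ⧸ LinearMap.range A.mulVecLin) ≃+ G1)
    (hG1 : G1 = ⊤) : False := by
  let F : (Fin (2*h-1) → ℤ) →+ (Fin (2*h) → ZMod 3) :=
    ((AddMonoidHom.snd (ZMod 2) (Fin (2*h) → ZMod 3)).comp G1.subtype).comp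
      (e.toAddMonoidHom.comp ((LinearMap.range A.mulVecLin).mkQ.toAddMonoidHom))
  have hF : ∀ x, F x = (((e (Submodule.Quotient.mk x) : G1) :
      ZMod 2 × (Fin (2*h) → ZMod 3))).2 := fun x => rfl
  have hFsurj : Function.Surjective F := by
    intro y
    have hy : ((0, y) : ZMod 2 × (Fin (2*h) → ZMod 3)) ∈ G1 := by rw [hG1]; trivial
    obtain ⟨q, hq⟩ := e.surjective ⟨(0,y), hy⟩
    obtain ⟨x, rfl⟩ := Submodule.Quotient.mk_surjective _ q
    exact ⟨x, by rw [hF, hq]⟩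
  have hsmul : ∀ a : ZMod 3, (3:ℕ) • a = 0 := by decide
  let fbar : (Fin (2*h-1) → ZMod 3) → (Fin (2*h) → ZMod 3) :=
    fun v => F (fun i => ((v i).val : ℤ))
  have hfbarsurj : Function.Surjective fbar := by
    intro y
    obtain ⟨x, hx⟩ := hFsurj y
    refine ⟨fun i => (x i : ZMod 3), ?_⟩
    have hdvd : ∀ i, (3:ℤ) ∣ x i - (((x i : ZMod 3)).val : ℤ) := by
      intro i
      have : ((x i - (((x i : ZMod 3)).val : ℤ) : ℤ) : ZMod 3) = 0 := by
        push_cast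
        simp [ZMod.natCast_val, ZMod.cast_id]
      exact (ZMod.intCast_zmod_eq_zero_iff_dvd _ 3).mp this
    have hdiffz : F (fun i => x i - (((x i : ZMod 3)).val : ℤ)) = 0 := by
      have : (fun i => x i - (((x i : ZMod 3)).val : ℤ)) =
          (3:ℕ) • (fun i => (x i - (((x i : ZMod 3)).val : ℤ)) / 3) := by
        funext i
        obtain ⟨c, hc⟩ := hdvd i
        rw [Pi.smul_apply, nsmul_eq_mul]
        push_cast
        rw [hc]
        omega
      rw [this, map_nsmul]
      funext i
      exact hsmul _
    have : F (fun i => (((x i : ZMod 3)).val : ℤ)) = F x := by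
      have h2 : F x - F (fun i => (((x i : ZMod 3)).val : ℤ)) = 0 := by
        rw [← F.map_sub]; exact hdiffz
      exact (sub_eq_zero.mp h2).symm
    rw [show fbar (fun i => (x i : ZMod 3)) = F (fun i => (((x i : ZMod 3)).val : ℤ)) from rfl,
      this, hx]
  have hcard := Fintype.card_le_of_surjective fbar hfbarsurj
  simp [Fintype.card_fun] at hcard
  have hlt : (3:ℕ)^(2*h-1) < 3^(2*h) := Nat.pow_lt_pow_right (by norm_num) (by omega)
  exact absurd hcard (not_le.mpr hlt)

/- STATEMENT 10: Suppose β = β₁ ⊕ β₂ is an orthogonal decomposition of the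
   linking form β = [1/2] ⊕ ⊕ʰ [[0,1/3],[1/3,0]] on G = ℤ/2 ⊕ (ℤ/3)^{2h}, where
   β₁ (the form on G₁) is presented by an even symmetric nonsingular integer
   matrix A of rank 2h−1 (with induced linking form −A⁻¹ mod ℤ), and β₂ (the
   form on G₂) is metabolic with metabolizer H.  Then H is a nontrivial
   3-group, and hence contains a nonzero character χ of order 3 with β(χ,χ)=0. -/
theorem stmt10 (h : ℕ) (hh : 1 ≤ h)
    (G1 G2 : AddSubgroup (ZMod 2 × (Fin (2 * h) → ZMod 3)))
    (hcompl : IsCompl G1 G2)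
    (horth : ∀ x ∈ G1, ∀ y ∈ G2, exForm h x y = 0)
    (A : Matrix (Fin (2 * h - 1)) (Fin (2 * h - 1)) ℤ)
    (hAdet : A.det ≠ 0) (hAsymm : A.IsSymm) (hAeven : ∀ i, 2 ∣ A i i)
    (e : ((Fin (2 * h - 1) → ℤ) ⧸ LinearMap.range A.mulVecLin) ≃+ G1)
    (hind : ∀ x y : Fin (2 * h - 1) → ℤ,
      exForm h (e (Submodule.Quotient.mk x) : ZMod 2 × (Fin (2 * h) → ZMod 3))
          (e (Submodule.Quotient.mk y) : ZMod 2 × (Fin (2 * h) → ZMod 3)) =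
        (((-((fun i => (x i : ℚ)) ⬝ᵥ
            ((A.map (fun z : ℤ => (z : ℚ)))⁻¹).mulVec (fun i => (y i : ℚ)))) : ℚ) :
          AddCircle (1 : ℚ)))
    (H : AddSubgroup (ZMod 2 × (Fin (2 * h) → ZMod 3))) (hHle : H ≤ G2)
    (hmet : (H : Set (ZMod 2 × (Fin (2 * h) → ZMod 3))) =
      {g | g ∈ G2 ∧ ∀ x ∈ H, exForm h g x = 0}) :
    H ≠ ⊥ ∧ (∃ k : ℕ, Nat.card H = 3 ^ k) ∧
      ∃ χ ∈ H, χ ≠ 0 ∧ addOrderOf χ = 3 ∧ exForm h χ χ = 0 := by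
  have hself0 : ∀ χ ∈ H, exForm h χ χ = 0 := by
    intro χ hχ
    have hmem : χ ∈ (H : Set (ZMod 2 × (Fin (2 * h) → ZMod 3))) := hχ
    rw [hmet] at hmem
    exact hmem.2 χ hχ
  have hfst : ∀ χ ∈ H, χ.1 = 0 := by
    intro χ hχ
    have h01 : ∀ a : ZMod 2, a = 0 ∨ a = 1 := by decide
    rcases h01 χ.1 with h0 | h1
    · exact h0
    · exact absurd (hself0 χ hχ) (exForm_self_ne h χ h1)
  have hG2 : G2 ≠ ⊥ := by
    intro hbot
    have hG1 : G1 = ⊤ := by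
      have hc := codisjoint_iff.mp hcompl.codisjoint
      rw [hbot, sup_bot_eq] at hc
      exact hc
    exact stmt10_counting h hh G1 A e hG1
  have hHne : H ≠ ⊥ := by
    intro hbot
    apply hG2
    rw [eq_bot_iff]
    intro g hg
    have hgH : g ∈ (H : Set (ZMod 2 × (Fin (2 * h) → ZMod 3))) := by
      rw [hmet]
      refine ⟨hg, fun x hx => ?_⟩
      rw [hbot, AddSubgroup.mem_bot] at hx
      rw [hx]
      exact exForm_zero_right h g
    rw [← hbot]
    exact hgH
  have hsmul3 : ∀ a : ZMod 3, (3:ℕ) • a = 0 := by decide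
  have h3χ : ∀ χ ∈ H, (3:ℕ) • χ = 0 := by
    intro χ hχ
    have h1 := hfst χ hχ
    have hrw : (3:ℕ) • χ = ((3:ℕ) • χ.1, (3:ℕ) • χ.2) := rfl
    rw [hrw, Prod.mk_eq_zero]
    constructor
    · rw [h1]; simp
    · funext i; exact hsmul3 _
  have hcard : ∃ k : ℕ, Nat.card H = 3 ^ k := by
    let φ : H →+ (Fin (2*h) → ZMod 3) :=
      (AddMonoidHom.snd (ZMod 2) (Fin (2*h) → ZMod 3)).comp H.subtype
    have hφ : Function.Injective φ := by
      intro a b hab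
      apply Subtype.ext
      apply Prod.ext
      · rw [hfst _ a.2, hfst _ b.2]
      · exact hab
    have hdvd : Nat.card H ∣ Nat.card (Fin (2*h) → ZMod 3) :=
      AddSubgroup.card_dvd_of_injective φ hφ
    have hcard3 : Nat.card (Fin (2*h) → ZMod 3) = 3 ^ (2*h) := by
      simp [Nat.card_eq_fintype_card]
    rw [hcard3] at hdvd
    obtain ⟨k, _, hck⟩ := (Nat.dvd_prime_pow Nat.prime_three).mp hdvd
    exact ⟨k, hck⟩
  have hex : ∃ χ ∈ H, χ ≠ 0 := by
    by_contra hcon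
    push_neg at hcon
    exact hHne ((AddSubgroup.eq_bot_iff_forall H).mpr hcon)
  obtain ⟨χ, hχH, hχ0⟩ := hex
  haveI : Fact (Nat.Prime 3) := ⟨Nat.prime_three⟩
  exact ⟨hHne, hcard, χ, hχH, hχ0, addOrderOf_eq_prime (h3χ χ hχH) hχ0, hself0 χ hχH⟩
end

section
/- Let β be the linking form on Z/2 ⊕ (Z/3)^{2h} given by [1/2] ⊕ ⊕^h [[0,1/3],[1/3,0]]. Then any decomposition β = β1 ⊕ β2 with β1 presented by an integer matrix of rank ≤ 2h−1 and β2 metabolic forces β2 to be nontrivial and its metabolizer to contain a nonzero order-3 element χ with β(χ,χ)=0. -/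
open Matrix

lemma zmod2_ne_zero {a : ZMod 2} (ha : a ≠ 0) : a = 1 := by
  revert ha; revert a; decide

lemma three_smul_zmod3 (a : ZMod 3) : 3 • a = 0 := by
  revert a; decide

lemma three_smul_zmod2 (a : ZMod 2) : 3 • a = a := by
  revert a; decide

lemma half_ne_zero_addCircle : ((1 / 2 : ℚ) : AddCircle (1 : ℚ)) ≠ 0 := by
  intro hc
  rw [AddCircle.coe_eq_zero_iff] at hc
  obtain ⟨n, hn⟩ := hc
  rw [zsmul_eq_mul, mul_one] at hn
  have h2 : ((2 * n : ℤ) : ℚ) = 1 := by push_cast; linarith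
  have : (2 * n : ℤ) = 1 := by exact_mod_cast h2
  omega

/- STATEMENT 14 (algebraic consequence): any decomposition of the form β on
   ℤ/2 ⊕ (ℤ/3)^{2h} as an orthogonal sum β₁ ⊕ β₂, with β₁ presented by a
   nonsingular symmetric integer matrix of rank r ≤ 2h−1 (inducing β₁ as
   −A⁻¹ mod ℤ) and β₂ metabolic with metabolizer H, forces β₂ to be nontrivial
   and H to contain a nonzero order-3 element χ with β(χ,χ) = 0. -/
theorem stmt14 (h : ℕ) (hh : 1 ≤ h)
    (G1 G2 : AddSubgroup (ZMod 2 × (Fin (2 * h) → ZMod 3)))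
    (hcompl : IsCompl G1 G2)
    (horth : ∀ x ∈ G1, ∀ y ∈ G2, exForm h x y = 0)
    (r : ℕ) (hr : r ≤ 2 * h - 1)
    (A : Matrix (Fin r) (Fin r) ℤ)
    (hAdet : A.det ≠ 0) (hAsymm : A.IsSymm)
    (e : ((Fin r → ℤ) ⧸ LinearMap.range A.mulVecLin) ≃+ G1)
    (hind : ∀ x y : Fin r → ℤ,
      exForm h (e (Submodule.Quotient.mk x) : ZMod 2 × (Fin (2 * h) → ZMod 3))
          (e (Submodule.Quotient.mk y) : ZMod 2 × (Fin (2 * h) → ZMod 3)) =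
        (((-((fun i => (x i : ℚ)) ⬝ᵥ
            ((A.map (fun z : ℤ => (z : ℚ)))⁻¹).mulVec (fun i => (y i : ℚ)))) : ℚ) :
          AddCircle (1 : ℚ)))
    (H : AddSubgroup (ZMod 2 × (Fin (2 * h) → ZMod 3))) (hHle : H ≤ G2)
    (hmet : (H : Set (ZMod 2 × (Fin (2 * h) → ZMod 3))) =
      {g | g ∈ G2 ∧ ∀ x ∈ H, exForm h g x = 0}) :
    G2 ≠ ⊥ ∧ ∃ χ ∈ H, χ ≠ 0 ∧ addOrderOf χ = 3 ∧ exForm h χ χ = 0 := by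
  -- Abbreviation for the ambient group
  set G := ZMod 2 × (Fin (2 * h) → ZMod 3) with hG
  -- Step 1: G2 ≠ ⊥ (rank argument: G/3G has rank 2h > r).
  have hG2ne : G2 ≠ ⊥ := by
    intro hbot
    have hG1top : G1 = ⊤ := by
      have := hcompl.codisjoint
      rw [hbot, codisjoint_bot] at this
      exact this
    -- the surjection ℤ^r → G
    set f : (Fin r → ℤ) →+ G :=
      (G1.subtype.comp e.toAddMonoidHom).comp
        (LinearMap.range A.mulVecLin).mkQ.toAddMonoidHom with hf
    have hfsurj : Function.Surjective f := by
      intro g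
      obtain ⟨q, hq⟩ := e.surjective ⟨g, hG1top ▸ AddSubgroup.mem_top g⟩
      obtain ⟨x, rfl⟩ := Submodule.Quotient.mk_surjective _ q
      exact ⟨x, by simp [hf, hq]⟩
    set v : Fin r → (Fin (2 * h) → ZMod 3) := fun i => (f (Pi.single i 1)).2 with hv
    have hdecomp : ∀ x : Fin r → ℤ, (f x).2 = ∑ i, (x i : ZMod 3) • v i := by
      intro x
      have hx : x = ∑ i, (x i) • Pi.single i (1 : ℤ) := by
        conv_lhs => rw [← Finset.univ_sum_single x]
        refine Finset.sum_congr rfl fun i _ => ?_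
        rw [← Pi.single_smul, smul_eq_mul, mul_one]
      have hfx : f x = ∑ i, (x i) • f (Pi.single i 1) := by
        conv_lhs => rw [hx]
        rw [map_sum]
        exact Finset.sum_congr rfl fun i _ => map_zsmul f _ _
      rw [hfx, Prod.snd_sum]
      refine Finset.sum_congr rfl fun i _ => ?_
      rw [Prod.smul_snd, ← Int.cast_smul_eq_zsmul (ZMod 3)]
    -- the linear map over ZMod 3
    set l := Fintype.linearCombination (ZMod 3) v with hl
    have hlsurj : Function.Surjective l := by
      intro w
      obtain ⟨x, hx⟩ := hfsurj (0, w)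
      refine ⟨fun i => (x i : ZMod 3), ?_⟩
      rw [hl, Fintype.linearCombination_apply, ← hdecomp, hx]
    have h1 : Module.finrank (ZMod 3) (Fin (2 * h) → ZMod 3) ≤
        Module.finrank (ZMod 3) (Fin r → ZMod 3) := by
      have h2 := LinearMap.finrank_range_le l
      rwa [LinearMap.range_eq_top.mpr hlsurj, finrank_top] at h2
    rw [Module.finrank_fin_fun, Module.finrank_fin_fun] at h1
    omega
  -- The metabolizer condition gives that self-pairings vanish on H
  have hself : ∀ g ∈ H, ∀ x ∈ H, exForm h g x = 0 := by
    intro g hg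
    have : g ∈ (H : Set G) := hg
    rw [hmet] at this
    exact this.2
  -- Step 2: H ≠ ⊥.
  have hHne : H ≠ ⊥ := by
    intro hb
    apply hG2ne
    rw [AddSubgroup.eq_bot_iff_forall]
    intro g hg
    have : g ∈ (H : Set G) := by
      rw [hmet]
      refine ⟨hg, fun x hx => ?_⟩
      rw [hb, AddSubgroup.mem_bot] at hx
      rw [hx]
      exact exForm_zero_right h g
    rw [hb] at this
    exact this
  -- Step 3: every element of H has trivial ZMod 2 component.
  have hfst : ∀ g ∈ H, g.1 = 0 := by
    intro g hg
    by_contra hne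
    have h1 : g.1 = 1 := zmod2_ne_zero hne
    have h3g : (3 : ℕ) • g ∈ H := AddSubgroup.nsmul_mem H hg 3
    have hcomp : exForm h g (3 • g) = ((1 / 2 : ℚ) : AddCircle (1 : ℚ)) := by
      have hfst3 : ((3 : ℕ) • g).1 = (1 : ZMod 2) := by
        rw [Prod.smul_fst, three_smul_zmod2, h1]
      have hsnd3 : ∀ k, ((3 : ℕ) • g).2 k = 0 := by
        intro k
        rw [Prod.smul_snd, Pi.smul_apply, three_smul_zmod3]
      unfold exForm
      rw [h1, hfst3]
      have hsum : ∀ k : Fin h,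
          (((g.2 ⟨2 * k.val, by have := k.isLt; omega⟩).val *
              (((3 : ℕ) • g).2 ⟨2 * k.val + 1, by have := k.isLt; omega⟩).val
            + (g.2 ⟨2 * k.val + 1, by have := k.isLt; omega⟩).val *
              (((3 : ℕ) • g).2 ⟨2 * k.val, by have := k.isLt; omega⟩).val : ℚ) / 3 : ℚ)
            = 0 := by
        intro k
        rw [hsnd3, hsnd3]
        simp
      rw [Finset.sum_congr rfl (fun k _ => hsum k), Finset.sum_const_zero]
      norm_num [show ((1 : ZMod 2)).val = 1 from rfl]
    have := hself g hg (3 • g) h3g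
    rw [hcomp] at this
    exact half_ne_zero_addCircle this
  -- Step 4: pick a nonzero element of H; it has order 3.
  obtain ⟨χ, hχH, hχ0⟩ : ∃ χ ∈ H, χ ≠ 0 := by
    by_contra hc
    push_neg at hc
    exact hHne ((AddSubgroup.eq_bot_iff_forall H).mpr hc)
  have h3χ : (3 : ℕ) • χ = 0 := by
    have hfχ := hfst χ hχH
    ext
    · rw [Prod.smul_fst, three_smul_zmod2, hfχ]; rfl
    · rw [Prod.smul_snd, Pi.smul_apply, three_smul_zmod3]; rfl
  haveI : Fact (Nat.Prime 3) := ⟨by norm_num⟩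
  refine ⟨hG2ne, χ, hχH, hχ0, addOrderOf_eq_prime h3χ hχ0, hself χ hχH χ hχH⟩
end

section
/- If H is a metabolizer for a nondegenerate symmetric Q/Z-valued form b on a finite abelian group G, then for each prime p the p-primary part H_p of H is a metabolizer for the restriction of b to G_p; consequently the order of each primary component G_p is a perfect square. -/
/-- The p-primary component of a finite abelian group: elements of p-power order. -/
def primary (G : Type*) [AddCommGroup G] (p : ℕ) : AddSubgroup G where
  carrier := {x : G | ∃ a : ℕ, p ^ a • x = 0}
  zero_mem' := ⟨0, smul_zero _⟩
  add_mem' := by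
    rintro x y ⟨a, ha⟩ ⟨c, hc⟩
    have hx : p ^ (a + c) • x = 0 := by
      rw [pow_add, mul_comm, mul_smul, ha, smul_zero]
    have hy : p ^ (a + c) • y = 0 := by
      rw [pow_add, mul_smul, hc, smul_zero]
    exact ⟨a + c, by rw [smul_add, hx, hy, add_zero]⟩
  neg_mem' := by
    rintro x ⟨a, ha⟩
    exact ⟨a, by rw [smul_neg, ha, neg_zero]⟩

namespace Stmt18

section Bil

variable {G : Type*} [AddCommGroup G]
variable (b : G → G → AddCircle (1 : ℚ))
variable (hbil : ∀ x y z : G, b (x + y) z = b x z + b y z)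
variable (hsymm : ∀ x y : G, b x y = b y x)

include hbil

lemma b_zero_left (y : G) : b 0 y = 0 := by
  have h := hbil 0 0 y
  rw [add_zero] at h
  exact (left_eq_add.mp h)

/-- `b (· , y)` as an `AddMonoidHom`. -/
def bleft (y : G) : G →+ AddCircle (1 : ℚ) where
  toFun x := b x y
  map_zero' := b_zero_left b hbil y
  map_add' a c := hbil a c y

lemma b_zsmul_left (n : ℤ) (x y : G) : b (n • x) y = n • b x y :=
  (bleft b hbil y).map_zsmul n x

lemma b_nsmul_left (n : ℕ) (x y : G) : b (n • x) y = n • b x y :=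
  (bleft b hbil y).map_nsmul n x

include hsymm

lemma b_add_right (x y z : G) : b x (y + z) = b x y + b x z := by
  rw [hsymm, hbil, hsymm y x, hsymm z x]

lemma b_zero_right (x : G) : b x 0 = 0 := by
  rw [hsymm, b_zero_left b hbil]

lemma b_nsmul_right (n : ℕ) (x y : G) : b x (n • y) = n • b x y := by
  rw [hsymm, b_nsmul_left b hbil, hsymm]

/-- Orthogonality of coprime torsion parts. -/
lemma b_orth (p : ℕ) {x z : G} (hx : ∃ a : ℕ, p ^ a • x = 0)
    {m : ℕ} (hm : m.Coprime p) (hz : m • z = 0) : b x z = 0 := by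
  obtain ⟨a, ha⟩ := hx
  set q : ℕ := p ^ a with hq
  have h1 : q • b x z = 0 := by
    rw [← b_nsmul_left b hbil, hq, ha, b_zero_left b hbil]
  have h2 : m • b x z = 0 := by
    rw [← b_nsmul_right b hbil hsymm, hz, b_zero_right b hbil hsymm]
  have hcop : ((m.gcd q : ℕ) : ℤ) = m * Nat.gcdA m q + q * Nat.gcdB m q :=
    Nat.gcd_eq_gcd_ab m q
  rw [Nat.Coprime.pow_right a hm, Nat.cast_one] at hcop
  calc b x z = ((m : ℤ) * Nat.gcdA m q + (q : ℤ) * Nat.gcdB m q) • b x z := by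
        rw [← hcop, one_smul]
    _ = 0 := by
        rw [add_smul, mul_comm (m : ℤ), mul_comm (q : ℤ), mul_smul, mul_smul,
          natCast_zsmul, natCast_zsmul, h1, h2, smul_zero, smul_zero, add_zero]



end Bil

lemma mem_primary_iff' {G : Type*} [AddCommGroup G] (p : ℕ) (x : G) :
    x ∈ primary G p ↔ ∃ a : ℕ, p ^ a • x = 0 := Iff.rfl

/-- Decomposition of an element into its `p`-part and its coprime part,
both multiples of the element. -/
lemma decomp {G : Type*} [AddCommGroup G] [Finite G] (p : ℕ) (hp : p.Prime) (x : G) :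
    ∃ y z : G, x = y + z ∧ y ∈ primary G p ∧
      (∃ m : ℕ, m.Coprime p ∧ m • z = 0) ∧
      (∃ c : ℤ, y = c • x) ∧ (∃ c : ℤ, z = c • x) := by
  have hfin : IsOfFinAddOrder x := isOfFinAddOrder_of_finite x
  set n : ℕ := addOrderOf x with hn
  have hn0 : n ≠ 0 := (addOrderOf_pos x).ne'
  set k : ℕ := n.factorization p with hk
  set q : ℕ := p ^ k with hq
  set m : ℕ := n / q with hm
  have hqm : q * m = n := Nat.ordProj_mul_ordCompl_eq_self n p
  have hpm : ¬ p ∣ m := Nat.not_dvd_ordCompl hp hn0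
  have hcopqm : Nat.Coprime q m := Nat.Coprime.pow_left k ((hp.coprime_iff_not_dvd).mpr hpm)
  have hnx : n • x = 0 := addOrderOf_nsmul_eq_zero x
  have hbez : ((q.gcd m : ℕ) : ℤ) = q * Nat.gcdA q m + m * Nat.gcdB q m := Nat.gcd_eq_gcd_ab q m
  rw [hcopqm, Nat.cast_one] at hbez
  set u : ℤ := Nat.gcdA q m
  set v : ℤ := Nat.gcdB q m
  refine ⟨((m : ℤ) * v) • x, ((q : ℤ) * u) • x, ?_, ⟨k, ?_⟩, ⟨m, ?_, ?_⟩, ⟨_, rfl⟩, ⟨_, rfl⟩⟩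
  · rw [← add_smul]
    have h1 : (m : ℤ) * v + (q : ℤ) * u = 1 := by rw [add_comm]; exact hbez.symm
    rw [h1, one_smul]
  · show p ^ k • ((m : ℤ) * v) • x = 0
    rw [← hq, ← natCast_zsmul (((m : ℤ) * v) • x) q, smul_smul]
    have h2 : (q : ℤ) * ((m : ℤ) * v) = v * (n : ℤ) := by rw [← hqm]; push_cast; ring
    rw [h2, mul_smul, natCast_zsmul, hnx, smul_zero]
  · exact Nat.Coprime.symm ((hp.coprime_iff_not_dvd).mpr hpm)
  · rw [← natCast_zsmul _ m, smul_smul]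
    have : (m : ℤ) * ((q : ℤ) * u) = u * n := by rw [← hqm]; push_cast; ring
    rw [this, ← smul_smul, natCast_zsmul, hnx, smul_zero]



local notation "C" => AddCircle (1 : ℚ)

lemma coe_eq_zero_iff' {r : ℚ} : (↑r : C) = 0 ↔ ∃ c : ℤ, (c : ℚ) = r := by
  rw [AddCircle.coe_eq_zero_iff]
  constructor
  · rintro ⟨c, hc⟩; exact ⟨c, by simpa using hc⟩
  · rintro ⟨c, hc⟩; exact ⟨c, by simpa using hc⟩

lemma coe_eq_coe_iff {r s : ℚ} : (↑r : C) = ↑s ↔ ∃ c : ℤ, (c : ℚ) = r - s := by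
  rw [← sub_eq_zero, ← AddCircle.coe_sub, coe_eq_zero_iff']

/-- `ZMod n` is equivalent to the `n`-torsion of `ℚ/ℤ`. -/
lemma torsionEquiv (n : ℕ) (hn : 0 < n) :
    Nonempty (ZMod n ≃ {x : C // (n : ℤ) • x = 0}) := by
  haveI : NeZero n := ⟨hn.ne'⟩
  have hnq : (n : ℚ) ≠ 0 := by exact_mod_cast hn.ne'
  have hmem : ∀ k : ZMod n, (n : ℤ) • ((((k.val : ℚ) / n : ℚ)) : C) = 0 := by
    intro k
    rw [← AddCircle.coe_zsmul]
    have : (n : ℤ) • ((k.val : ℚ) / n) = (k.val : ℚ) := by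
      rw [zsmul_eq_mul]; push_cast; field_simp
    rw [this, coe_eq_zero_iff']
    exact ⟨k.val, by push_cast; ring⟩
  refine ⟨Equiv.ofBijective (fun k => ⟨(((k.val : ℚ) / n : ℚ) : C), hmem k⟩) ⟨?_, ?_⟩⟩
  · intro a c h
    have h2 : ((((a.val : ℚ) / n : ℚ)) : C) = (((c.val : ℚ) / n : ℚ)) := congrArg Subtype.val h
    obtain ⟨d, hd⟩ := coe_eq_coe_iff.mp h2
    have hd2 : (d * n : ℤ) = (a.val : ℤ) - c.val := by
      have : (d : ℚ) * n = (a.val : ℚ) - c.val := by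
        rw [hd]; field_simp
      exact_mod_cast this
    have ha := a.val_lt
    have hc := c.val_lt
    have hd0 : d = 0 := by nlinarith [hd2, Int.ofNat_lt.mpr ha, Int.ofNat_lt.mpr hc]
    rw [hd0, zero_mul] at hd2
    apply ZMod.val_injective
    exact_mod_cast (by omega : (a.val : ℤ) = (c.val : ℤ))
  · rintro ⟨x, hx⟩
    induction x using QuotientAddGroup.induction_on with
    | H q =>
      rw [← AddCircle.coe_zsmul, coe_eq_zero_iff'] at hx
      obtain ⟨c, hc⟩ := hx
      have hq : q = (c : ℚ) / n := by
        rw [zsmul_eq_mul] at hc; push_cast at hc; field_simp; linarith [hc]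
      refine ⟨(c : ZMod n), Subtype.ext ?_⟩
      show ((((c : ZMod n).val : ℚ) / n : ℚ) : C) = (q : C)
      rw [coe_eq_coe_iff]
      refine ⟨-(c / n), ?_⟩
      have hval : (((c : ZMod n).val : ℕ) : ℤ) = c % n := ZMod.val_intCast c
      have hmod : c % n = c - n * (c / n) := Int.emod_def c n
      have hvalq : (((c : ZMod n).val : ℕ) : ℚ) = (c : ℚ) - n * ((c / n : ℤ) : ℚ) := by
        exact_mod_cast hval.trans hmod
      rw [hq, hvalq]
      field_simp
      push_cast
      ring

lemma zmodHomEquiv (n : ℕ) (A : Type*) [AddCommGroup A] :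
    Nonempty ((ZMod n →+ A) ≃ {x : A // (n : ℤ) • x = 0}) := by
  refine ⟨(ZMod.lift n).symm.trans (Equiv.subtypeEquiv ((zmultiplesHom A).symm) ?_)⟩
  intro f
  have h : (n : ℤ) • ((zmultiplesHom A).symm f : A) = f (n : ℤ) := by
    show (n : ℤ) • f 1 = f n
    rw [← map_zsmul, smul_eq_mul, mul_one]
  show f (n : ℤ) = 0 ↔ (n : ℤ) • ((zmultiplesHom A).symm f : A) = 0
  rw [h]

lemma charEquiv (A : Type*) [AddCommGroup A] [Finite A] :
    Nonempty ((A →+ C) ≃ A) := by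
  obtain ⟨ι, hι, n, hlt, ⟨e⟩⟩ := AddCommGroup.equiv_directSum_zmod_of_finite' A
  haveI := hι
  classical
  have hpos : ∀ i, 0 < n i := fun i => lt_trans Nat.zero_lt_one (hlt i)
  have e1 : (A →+ C) ≃ ((DirectSum ι fun i => ZMod (n i)) →+ C) :=
    (AddEquiv.addMonoidHomCongrLeftEquiv e)
  have e2 : ((DirectSum ι fun i => ZMod (n i)) →+ C) ≃ (∀ i, ZMod (n i) →+ C) :=
    (DFinsupp.liftAddHom (β := fun i => ZMod (n i)) (γ := AddCircle (1 : ℚ))).toEquiv.symm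
  have e3 : ∀ i, (ZMod (n i) →+ C) ≃ ZMod (n i) := fun i =>
    ((zmodHomEquiv (n i) (AddCircle (1 : ℚ))).some.trans (torsionEquiv (n i) (hpos i)).some.symm)
  exact ⟨e1.trans <| e2.trans <| (Equiv.piCongrRight e3).trans <|
    (DFinsupp.equivFunOnFintype (ι := ι)).symm.trans e.symm.toEquiv⟩


lemma card_orth {G : Type*} [AddCommGroup G] [Finite G]
    (b : G → G → AddCircle (1 : ℚ))
    (hbil : ∀ x y z : G, b (x + y) z = b x z + b y z)
    (hsymm : ∀ x y : G, b x y = b y x)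
    (hnd : ∀ g : G, (∀ x : G, b g x = 0) → g = 0)
    (K L : AddSubgroup G) (hL : ∀ g, g ∈ L ↔ ∀ x ∈ K, b g x = 0) :
    Nat.card G = Nat.card K * Nat.card L := by
  classical
  let Ψ : G →+ (↥K →+ AddCircle (1 : ℚ)) :=
    { toFun := fun g =>
        { toFun := fun x => b g ↑x
          map_zero' := b_zero_right b hbil hsymm g
          map_add' := fun x y => b_add_right b hbil hsymm g ↑x ↑y }
      map_zero' := by ext x; exact b_zero_left b hbil ↑x
      map_add' := fun g h => by ext x; exact hbil g h ↑x }
  let Θ : G →+ (G →+ AddCircle (1 : ℚ)) :=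
    { toFun := fun g =>
        { toFun := fun x => b g x
          map_zero' := b_zero_right b hbil hsymm g
          map_add' := fun x y => b_add_right b hbil hsymm g x y }
      map_zero' := by ext x; exact b_zero_left b hbil x
      map_add' := fun g h => by ext x; exact hbil g h x }
  obtain ⟨eG⟩ := charEquiv G
  haveI : Finite (G →+ AddCircle (1 : ℚ)) := Finite.of_equiv G eG.symm
  have hΘinj : Function.Injective Θ := by
    rw [injective_iff_map_eq_zero]
    intro g hg
    exact hnd g fun x => congrArg (fun F => F x) hg
  have hΘbij : Function.Bijective Θ :=
    (Nat.bijective_iff_injective_and_card Θ).mpr ⟨hΘinj, (Nat.card_congr eG).symm⟩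
  have hΨsurj : Function.Surjective Ψ := by
    intro f
    obtain ⟨F, hF⟩ := CharacterModule.dual_surjective_of_injective (R := ℤ)
      K.subtype.toIntLinearMap K.subtype_injective f
    obtain ⟨g, hg⟩ := hΘbij.2 F
    refine ⟨g, ?_⟩
    ext x
    have h1 : b g ↑x = F ↑x := congrArg (fun F => F (↑x : G)) hg
    have h2 : F ↑x = f x := congrArg (fun L => L x) hF
    exact h1.trans h2
  have hker : Ψ.ker = L := by
    ext g
    rw [AddMonoidHom.mem_ker, hL]
    constructor
    · intro h x hx
      exact congrArg (fun F => F (⟨x, hx⟩ : ↥K)) h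
    · intro h
      ext x
      exact h ↑x x.2
  have hcount := AddSubgroup.card_eq_card_quotient_mul_card_addSubgroup Ψ.ker
  obtain ⟨eK⟩ := charEquiv ↥K
  have hquot : Nat.card (G ⧸ Ψ.ker) = Nat.card ↥K := by
    rw [Nat.card_congr (QuotientAddGroup.quotientKerEquivOfSurjective Ψ hΨsurj).toEquiv]
    exact Nat.card_congr eK
  rw [hcount, hquot, hker]

end Stmt18

/- STATEMENT 18 -/
theorem stmt18 (G : Type*) [AddCommGroup G] [Finite G]
    (b : G → G → AddCircle (1 : ℚ))
    (hbil : ∀ x y z : G, b (x + y) z = b x z + b y z)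
    (hsymm : ∀ x y : G, b x y = b y x)
    (hnd : ∀ g : G, (∀ x : G, b g x = 0) → g = 0)
    (H : AddSubgroup G)
    (hmet : (H : Set G) = {g : G | ∀ x ∈ H, b g x = 0}) :
    ∀ p : ℕ, p.Prime →
      (((H ⊓ primary G p : AddSubgroup G) : Set G) =
        {g : G | g ∈ primary G p ∧ ∀ x ∈ H ⊓ primary G p, b g x = 0}) ∧
      IsSquare (Nat.card (primary G p)) := by
  intro p hp
  have hH : ∀ g ∈ H, ∀ x ∈ H, b g x = 0 := by
    intro g hg
    have : g ∈ {g : G | ∀ x ∈ H, b g x = 0} := hmet ▸ hg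
    exact this
  have part1 : ((H ⊓ primary G p : AddSubgroup G) : Set G) =
      {g : G | g ∈ primary G p ∧ ∀ x ∈ H ⊓ primary G p, b g x = 0} := by
    ext g
    simp only [SetLike.mem_coe, AddSubgroup.mem_inf, Set.mem_setOf_eq]
    constructor
    · rintro ⟨hgH, hgp⟩
      exact ⟨hgp, fun x hx => hH g hgH x (AddSubgroup.mem_inf.mp hx).1⟩
    · rintro ⟨hgp, horth⟩
      refine ⟨?_, hgp⟩
      have hmem : g ∈ {g : G | ∀ x ∈ H, b g x = 0} := by
        intro x hx
        obtain ⟨y, z, hxyz, hy, ⟨m, hm, hz⟩, ⟨cy, hcy⟩, ⟨cz, hcz⟩⟩ := Stmt18.decomp p hp x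
        have hyH : y ∈ H := hcy ▸ AddSubgroup.zsmul_mem H hx cy
        rw [hxyz, Stmt18.b_add_right b hbil hsymm]
        rw [horth y (AddSubgroup.mem_inf.mpr ⟨hyH, hy⟩),
          Stmt18.b_orth b hbil hsymm p hgp hm hz, add_zero]
      rw [← SetLike.mem_coe, hmet]
      exact hmem
  refine ⟨part1, ?_⟩
  set S := ↥(primary G p)
  set b' : S → S → AddCircle (1 : ℚ) := fun x y => b ↑x ↑y with hb'
  have hbil' : ∀ x y z : S, b' (x + y) z = b' x z + b' y z := fun x y z => hbil ↑x ↑y ↑z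
  have hsymm' : ∀ x y : S, b' x y = b' y x := fun x y => hsymm ↑x ↑y
  have hnd' : ∀ g : S, (∀ x : S, b' g x = 0) → g = 0 := by
    intro g hg
    have hall : ∀ x : G, b ↑g x = 0 := by
      intro x
      obtain ⟨y, z, hxyz, hy, ⟨m, hm, hz⟩, -, -⟩ := Stmt18.decomp p hp x
      rw [hxyz, Stmt18.b_add_right b hbil hsymm]
      have h1 : b ↑g y = 0 := hg ⟨y, hy⟩
      rw [h1, Stmt18.b_orth b hbil hsymm p g.2 hm hz, add_zero]
    exact Subtype.ext (hnd (↑g) hall)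
  set K : AddSubgroup S := (H ⊓ primary G p).addSubgroupOf (primary G p) with hK
  have hL : ∀ g : S, g ∈ K ↔ ∀ x ∈ K, b' g x = 0 := by
    intro g
    rw [AddSubgroup.mem_addSubgroupOf]
    constructor
    · intro hg x hx
      rw [AddSubgroup.mem_addSubgroupOf] at hx
      have := (Set.ext_iff.mp part1 ↑g).mp hg
      exact this.2 ↑x hx
    · intro h
      apply (Set.ext_iff.mp part1 ↑g).mpr
      refine ⟨g.2, ?_⟩
      intro x hx
      have hxp : x ∈ primary G p := (AddSubgroup.mem_inf.mp hx).2
      exact h ⟨x, hxp⟩ (by rwa [AddSubgroup.mem_addSubgroupOf])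
  have hcard := Stmt18.card_orth b' hbil' hsymm' hnd' K K hL
  exact ⟨Nat.card K, hcard⟩
end
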